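/- arXiv:1212.2257 — 2 statements merged into one kernel-verified Lean document; each statement's English description precedes it below -/
import Mathlib

section
/- If t1 ⊏̃_RS t2, t1 ⊏̃_RS t3 and t1 ∉ F_CLL, then t2∧t3 ∉ F_CLL. -/
namespace CLL

attribute [local instance] Classical.propDecidable

/-- CLL process terms over a set `Act` of visible actions.  The action `τ` is
represented by `none : Option Act`, a visible action `a` by `some a`. -/
inductive Tm (Act : Type) : Type where
  | nil  : Tm Act                            -- 0
  | bot  : Tm Act                            -- ⊥
  | pre  : Option Act → Tm Act → Tm Act      -- α.t
  | ec   : Tm Act → Tm Act → Tm Act          -- t □ t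
  | conj : Tm Act → Tm Act → Tm Act          -- t ∧ t
  | disj : Tm Act → Tm Act → Tm Act          -- t ∨ t
  | par  : Set Act → Tm Act → Tm Act → Tm Act -- t ∥_A t

/-- A transition model: a set of transitions `t →α t'`, of instances `t F` of the
inconsistency predicate, and of instances `t F̄_α` of the auxiliary predicates. -/
structure Model (Act : Type) where
  Tr   : Tm Act → Option Act → Tm Act → Prop
  F    : Tm Act → Prop
  Fbar : Tm Act → Option Act → Prop

variable {Act : Type}

/-- The least transition relation of the positive TSS `Strip(P_CLL, M)`:
ground instances of transition rules of `P_CLL` whose negative premises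
(checked against `M`) hold, with those negative premises removed. -/
inductive STr (M : Model Act) : Tm Act → Option Act → Tm Act → Prop where
  | pre (α : Option Act) (t : Tm Act) : STr M (Tm.pre α t) α t
  | ecL {t1 t2 y1 : Tm Act} {a : Act} :
      STr M t1 (some a) y1 → (∀ y, ¬ M.Tr t2 none y) →
      STr M (Tm.ec t1 t2) (some a) y1
  | ecR {t1 t2 y2 : Tm Act} {a : Act} :
      (∀ y, ¬ M.Tr t1 none y) → STr M t2 (some a) y2 →
      STr M (Tm.ec t1 t2) (some a) y2
  | ecTauL {t1 t2 y1 : Tm Act} :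
      STr M t1 none y1 → STr M (Tm.ec t1 t2) none (Tm.ec y1 t2)
  | ecTauR {t1 t2 y2 : Tm Act} :
      STr M t2 none y2 → STr M (Tm.ec t1 t2) none (Tm.ec t1 y2)
  | conjAct {t1 t2 y1 y2 : Tm Act} {a : Act} :
      STr M t1 (some a) y1 → STr M t2 (some a) y2 →
      STr M (Tm.conj t1 t2) (some a) (Tm.conj y1 y2)
  | conjTauL {t1 t2 y1 : Tm Act} :
      STr M t1 none y1 → STr M (Tm.conj t1 t2) none (Tm.conj y1 t2)
  | conjTauR {t1 t2 y2 : Tm Act} :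
      STr M t2 none y2 → STr M (Tm.conj t1 t2) none (Tm.conj t1 y2)
  | disjL (t1 t2 : Tm Act) : STr M (Tm.disj t1 t2) none t1
  | disjR (t1 t2 : Tm Act) : STr M (Tm.disj t1 t2) none t2
  | parTauL {A : Set Act} {t1 t2 y1 : Tm Act} :
      STr M t1 none y1 → STr M (Tm.par A t1 t2) none (Tm.par A y1 t2)
  | parTauR {A : Set Act} {t1 t2 y2 : Tm Act} :
      STr M t2 none y2 → STr M (Tm.par A t1 t2) none (Tm.par A t1 y2)
  | parL {A : Set Act} {t1 t2 y1 : Tm Act} {a : Act} :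
      STr M t1 (some a) y1 → (∀ y, ¬ M.Tr t2 none y) → a ∉ A →
      STr M (Tm.par A t1 t2) (some a) (Tm.par A y1 t2)
  | parR {A : Set Act} {t1 t2 y2 : Tm Act} {a : Act} :
      (∀ y, ¬ M.Tr t1 none y) → STr M t2 (some a) y2 → a ∉ A →
      STr M (Tm.par A t1 t2) (some a) (Tm.par A t1 y2)
  | parSync {A : Set Act} {t1 t2 y1 y2 : Tm Act} {a : Act} :
      STr M t1 (some a) y1 → STr M t2 (some a) y2 → a ∈ A →
      STr M (Tm.par A t1 t2) (some a) (Tm.par A y1 y2)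

/-- Least model of the `F̄_α` rules of `Strip(P_CLL, M)`. -/
inductive SFbar (M : Model Act) : Tm Act → Option Act → Prop where
  | intro {t1 t2 y : Tm Act} {α : Option Act} :
      STr M (Tm.conj t1 t2) α y → ¬ M.F y → SFbar M (Tm.conj t1 t2) α

/-- Least model of the `F` rules of `Strip(P_CLL, M)`. -/
inductive SF (M : Model Act) : Tm Act → Prop where
  | bot : SF M Tm.bot
  | pre {t : Tm Act} (α : Option Act) : SF M t → SF M (Tm.pre α t)
  | disj {t1 t2 : Tm Act} : SF M t1 → SF M t2 → SF M (Tm.disj t1 t2)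
  | ecL {t1 t2 : Tm Act} : SF M t1 → SF M (Tm.ec t1 t2)
  | ecR {t1 t2 : Tm Act} : SF M t2 → SF M (Tm.ec t1 t2)
  | conjL {t1 t2 : Tm Act} : SF M t1 → SF M (Tm.conj t1 t2)
  | conjR {t1 t2 : Tm Act} : SF M t2 → SF M (Tm.conj t1 t2)
  | parL {A : Set Act} {t1 t2 : Tm Act} : SF M t1 → SF M (Tm.par A t1 t2)
  | parR {A : Set Act} {t1 t2 : Tm Act} : SF M t2 → SF M (Tm.par A t1 t2)
  | conjMisL {t1 t2 y1 : Tm Act} {a : Act} :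
      STr M t1 (some a) y1 → (∀ y, ¬ M.Tr t2 (some a) y) →
      (∀ y, ¬ M.Tr (Tm.conj t1 t2) none y) → SF M (Tm.conj t1 t2)
  | conjMisR {t1 t2 y2 : Tm Act} {a : Act} :
      (∀ y, ¬ M.Tr t1 (some a) y) → STr M t2 (some a) y2 →
      (∀ y, ¬ M.Tr (Tm.conj t1 t2) none y) → SF M (Tm.conj t1 t2)
  | conjDead {t1 t2 z : Tm Act} {α : Option Act} :
      STr M (Tm.conj t1 t2) α z → ¬ M.Fbar (Tm.conj t1 t2) α →
      SF M (Tm.conj t1 t2)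

/-- `M` is a stable transition model of `P_CLL`:  `M` coincides with the least
model of the positive TSS `Strip(P_CLL, M)`. -/
def IsStable (M : Model Act) : Prop :=
  (∀ t α t', M.Tr t α t' ↔ STr M t α t') ∧
  (∀ t, M.F t ↔ SF M t) ∧
  (∀ t α, M.Fbar t α ↔ SFbar M t α)

/-- `t` is stable: it has no τ-transition. -/
def Stable (M : Model Act) (t : Tm Act) : Prop := ∀ t', ¬ M.Tr t none t'

/-- The ready set `I(t)`. -/
def Ready (M : Model Act) (t : Tm Act) : Set (Option Act) :=
  {α | ∃ u, M.Tr t α u}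

/-- One τ-step between consistent terms: `t →τ_F s`. -/
def TauF (M : Model Act) (t s : Tm Act) : Prop :=
  M.Tr t none s ∧ ¬ M.F t ∧ ¬ M.F s

/-- `t ⇒ε_F s`: a sequence of τ-transitions all whose terms (endpoints included)
are consistent. -/
def EpsF (M : Model Act) (t s : Tm Act) : Prop :=
  ¬ M.F t ∧ Relation.ReflTransGen (TauF M) t s

/-- `t ⇒ε_F| s`:  `t ⇒ε_F s` with `s` stable. -/
def EpsFS (M : Model Act) (t s : Tm Act) : Prop :=
  EpsF M t s ∧ Stable M s

/-- `t ⇒α_F s`. -/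
def WeakF (M : Model Act) (α : Option Act) (t s : Tm Act) : Prop :=
  ∃ r p, EpsF M t r ∧ M.Tr r α p ∧ EpsF M p s

/-- `t ⇒α_F| s`. -/
def WeakFS (M : Model Act) (α : Option Act) (t s : Tm Act) : Prop :=
  WeakF M α t s ∧ Stable M s

/-- `R` is a stable ready simulation relation. -/
def IsRS (M : Model Act) (R : Tm Act → Tm Act → Prop) : Prop :=
  ∀ t s, R t s →
    (Stable M t ∧ Stable M s) ∧
    (¬ M.F t → ¬ M.F s) ∧
    (∀ (a : Act) t', WeakFS M (some a) t t' →
      ∃ s', WeakFS M (some a) s s' ∧ R t' s') ∧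
    (¬ M.F t → Ready M t = Ready M s)

/-- `t ⊏̃_RS s`. -/
def RSs (M : Model Act) (t s : Tm Act) : Prop :=
  ∃ R, IsRS M R ∧ R t s

/-- `t ⊑_RS s`. -/
def RSle (M : Model Act) (t s : Tm Act) : Prop :=
  ∀ t', EpsFS M t t' → ∃ s', EpsFS M s s' ∧ RSs M t' s'

/-- `t =_RS s`. -/
def RSeq (M : Model Act) (t s : Tm Act) : Prop :=
  RSle M t s ∧ RSle M s t

/-- The binary operators `□`, `∧` and `∥_A`. -/
def IsStaticOp (Act : Type) (op : Tm Act → Tm Act → Tm Act) : Prop :=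
  op = Tm.ec ∨ op = Tm.conj ∨ ∃ A : Set Act, op = Tm.par A

/-- General external choice `□_{i<n} t_i` over a finite sequence of terms. -/
def bigEC : List (Tm Act) → Tm Act
  | [] => Tm.nil
  | t :: ts => ts.foldl Tm.ec t

/-- General disjunction `⋁_{i<n} t_i` over a finite (nonempty) sequence. -/
def bigDisj : List (Tm Act) → Tm Act
  | [] => Tm.nil
  | t :: ts => ts.foldl Tm.disj t

/-- `□_{i<n} a_i.t_i` for a sequence of prefixed terms given by pairs. -/
def ecPre (l : List (Act × Tm Act)) : Tm Act :=
  bigEC (l.map fun p => Tm.pre (some p.1) p.2)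

/-- The sequence of all `a_i.(t_i ∧ s_j)` with `a_i = b_j`. -/
noncomputable def matched (l1 l2 : List (Act × Tm Act)) : List (Act × Tm Act) :=
  ((l1.product l2).filter fun q => decide (q.1.1 = q.2.1)).map
    fun q => (q.1.1, Tm.conj q.1.2 q.2.2)

/-- The right-hand side `((□Ω1)□(□Ω2))□(□Ω3)` of the expansion law. -/
noncomputable def expRHS (A : Set Act) (l1 l2 : List (Act × Tm Act)) : Tm Act :=
  Tm.ec
    (Tm.ec
      (bigEC ((l1.filter fun p => decide (p.1 ∉ A)).map
        fun p => Tm.pre (some p.1) (Tm.par A p.2 (ecPre l2))))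
      (bigEC ((l2.filter fun q => decide (q.1 ∉ A)).map
        fun q => Tm.pre (some q.1) (Tm.par A (ecPre l1) q.2))))
    (bigEC (((l1.product l2).filter fun q => decide (q.1.1 = q.2.1 ∧ q.1.1 ∈ A)).map
      fun q => Tm.pre (some q.1.1) (Tm.par A q.1.2 q.2.2)))

/-- Basic process terms: built from `0` by prefixing, `∨`, `□` and `∥_A`. -/
inductive Basic : Tm Act → Prop where
  | nil : Basic Tm.nil
  | pre (α : Option Act) {t : Tm Act} : Basic t → Basic (Tm.pre α t)
  | disj {t1 t2 : Tm Act} : Basic t1 → Basic t2 → Basic (Tm.disj t1 t2)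
  | ec {t1 t2 : Tm Act} : Basic t1 → Basic t2 → Basic (Tm.ec t1 t2)
  | par (A : Set Act) {t1 t2 : Tm Act} :
      Basic t1 → Basic t2 → Basic (Tm.par A t1 t2)

/-- Derivability `⊢ t ≤ s` in the axiomatic system `AX_CLL`. -/
inductive Deriv : Tm Act → Tm Act → Prop where
  -- inference rules
  | refl (t : Tm Act) : Deriv t t
  | trans {t u s : Tm Act} : Deriv t u → Deriv u s → Deriv t s
  | pre_mono (α : Option Act) {t s : Tm Act} :
      Deriv t s → Deriv (Tm.pre α t) (Tm.pre α s)
  | ec_mono {t1 s1 t2 s2 : Tm Act} :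
      Deriv t1 s1 → Deriv t2 s2 → Deriv (Tm.ec t1 t2) (Tm.ec s1 s2)
  | conj_mono {t1 s1 t2 s2 : Tm Act} :
      Deriv t1 s1 → Deriv t2 s2 → Deriv (Tm.conj t1 t2) (Tm.conj s1 s2)
  | disj_mono {t1 s1 t2 s2 : Tm Act} :
      Deriv t1 s1 → Deriv t2 s2 → Deriv (Tm.disj t1 t2) (Tm.disj s1 s2)
  | par_mono (A : Set Act) {t1 s1 t2 s2 : Tm Act} :
      Deriv t1 s1 → Deriv t2 s2 → Deriv (Tm.par A t1 t2) (Tm.par A s1 s2)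
  -- EC1–EC5
  | ec_comm (x y : Tm Act) : Deriv (Tm.ec x y) (Tm.ec y x)
  | ec_assoc1 (x y z : Tm Act) : Deriv (Tm.ec (Tm.ec x y) z) (Tm.ec x (Tm.ec y z))
  | ec_assoc2 (x y z : Tm Act) : Deriv (Tm.ec x (Tm.ec y z)) (Tm.ec (Tm.ec x y) z)
  | ec_idem1 (x : Tm Act) : Deriv (Tm.ec x x) x
  | ec_idem2 (x : Tm Act) : Deriv x (Tm.ec x x)
  | ec_nil1 (x : Tm Act) : Deriv (Tm.ec x Tm.nil) x
  | ec_nil2 (x : Tm Act) : Deriv x (Tm.ec x Tm.nil)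
  | ec_bot1 (x : Tm Act) : Deriv (Tm.ec x Tm.bot) Tm.bot
  | ec_bot2 (x : Tm Act) : Deriv Tm.bot (Tm.ec x Tm.bot)
  -- DI1–DI5
  | di_comm (x y : Tm Act) : Deriv (Tm.disj x y) (Tm.disj y x)
  | di_assoc1 (x y z : Tm Act) :
      Deriv (Tm.disj x (Tm.disj y z)) (Tm.disj (Tm.disj x y) z)
  | di_assoc2 (x y z : Tm Act) :
      Deriv (Tm.disj (Tm.disj x y) z) (Tm.disj x (Tm.disj y z))
  | di_idem1 (x : Tm Act) : Deriv (Tm.disj x x) x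
  | di_idem2 (x : Tm Act) : Deriv x (Tm.disj x x)
  | di_bot1 (x : Tm Act) : Deriv (Tm.disj x Tm.bot) x
  | di_bot2 (x : Tm Act) : Deriv x (Tm.disj x Tm.bot)
  | di_le (x y : Tm Act) : Deriv x (Tm.disj x y)
  -- CO1–CO4
  | co_comm (x y : Tm Act) : Deriv (Tm.conj x y) (Tm.conj y x)
  | co_assoc1 (x y z : Tm Act) :
      Deriv (Tm.conj (Tm.conj x y) z) (Tm.conj x (Tm.conj y z))
  | co_assoc2 (x y z : Tm Act) :
      Deriv (Tm.conj x (Tm.conj y z)) (Tm.conj (Tm.conj x y) z)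
  | co_idem1 (x : Tm Act) : Deriv (Tm.conj x x) x
  | co_idem2 (x : Tm Act) : Deriv x (Tm.conj x x)
  | co_bot1 (x : Tm Act) : Deriv (Tm.conj x Tm.bot) Tm.bot
  | co_bot2 (x : Tm Act) : Deriv Tm.bot (Tm.conj x Tm.bot)
  -- DS1–DS4
  | ds1 (x y z : Tm Act) :
      Deriv (Tm.ec x (Tm.disj y z)) (Tm.disj (Tm.ec x y) (Tm.ec x z))
  | ds2 (x y z : Tm Act) :
      Deriv (Tm.conj x (Tm.disj y z)) (Tm.disj (Tm.conj x y) (Tm.conj x z))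
  | ds3 (A : Set Act) (x y z : Tm Act) :
      Deriv (Tm.par A x (Tm.disj y z)) (Tm.disj (Tm.par A x y) (Tm.par A x z))
  | ds4 (a : Act) {x y : Tm Act} : Basic x → Basic y →
      Deriv (Tm.pre (some a) (Tm.disj x y))
            (Tm.ec (Tm.pre (some a) x) (Tm.pre (some a) y))
  -- PR1, PR2
  | pr1a (a : Act) : Deriv (Tm.pre (some a) Tm.bot) Tm.bot
  | pr1b (a : Act) : Deriv Tm.bot (Tm.pre (some a) Tm.bot)
  | pr2a (x : Tm Act) : Deriv (Tm.pre none x) x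
  | pr2b (x : Tm Act) : Deriv x (Tm.pre none x)
  -- PA1, PA2
  | pa_comm (A : Set Act) (x y : Tm Act) : Deriv (Tm.par A x y) (Tm.par A y x)
  | pa_bot1 (A : Set Act) (x : Tm Act) : Deriv (Tm.par A x Tm.bot) Tm.bot
  | pa_bot2 (A : Set Act) (x : Tm Act) : Deriv Tm.bot (Tm.par A x Tm.bot)
  -- ECC1–ECC3
  | ecc1a (l1 l2 : List (Act × Tm Act)) :
      ({a | a ∈ l1.map Prod.fst} : Set Act) ≠ {a | a ∈ l2.map Prod.fst} →
      Deriv (Tm.conj (ecPre l1) (ecPre l2)) Tm.bot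
  | ecc1b (l1 l2 : List (Act × Tm Act)) :
      ({a | a ∈ l1.map Prod.fst} : Set Act) ≠ {a | a ∈ l2.map Prod.fst} →
      Deriv Tm.bot (Tm.conj (ecPre l1) (ecPre l2))
  | ecc2 (l : List (Act × Tm Act × Tm Act)) :
      Deriv (ecPre (l.map fun p => (p.1, Tm.conj p.2.1 p.2.2)))
            (Tm.conj (ecPre (l.map fun p => (p.1, p.2.1)))
                     (ecPre (l.map fun p => (p.1, p.2.2))))
  | ecc3 (l : List (Act × Tm Act × Tm Act)) :
      (l.map Prod.fst).Nodup →
      Deriv (Tm.conj (ecPre (l.map fun p => (p.1, p.2.1)))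
                     (ecPre (l.map fun p => (p.1, p.2.2))))
            (ecPre (l.map fun p => (p.1, Tm.conj p.2.1 p.2.2)))
  -- EXP1, EXP2
  | exp1 (A : Set Act) (l1 l2 : List (Act × Tm Act)) :
      (∀ p ∈ l1, Basic p.2) → (∀ q ∈ l2, Basic q.2) →
      Deriv (Tm.par A (ecPre l1) (ecPre l2)) (expRHS A l1 l2)
  | exp2 (A : Set Act) (l1 l2 : List (Act × Tm Act)) :
      (∀ p ∈ l1, Basic p.2) → (∀ q ∈ l2, Basic q.2) →
      Deriv (expRHS A l1 l2) (Tm.par A (ecPre l1) (ecPre l2))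

/-- The set `NF_B` of normal forms different from `⊥`. -/
inductive NFB : Tm Act → Prop where
  | mk (ls : List (List (Act × Tm Act))) :
      ls ≠ [] →
      (∀ l ∈ ls, (l.map Prod.fst).Nodup) →
      (∀ l ∈ ls, ∀ p ∈ l, NFB p.2) →
      NFB (bigDisj (ls.map ecPre))

/-- Normal forms. -/
def NF (t : Tm Act) : Prop := t = Tm.bot ∨ NFB t

section Aux

variable {Act : Type} {M : Model Act}

/-- Size of a term. -/
def sz : Tm Act → ℕ
  | .nil => 1
  | .bot => 1
  | .pre _ t => sz t + 1
  | .ec t u => sz t + sz u + 1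
  | .conj t u => sz t + sz u + 1
  | .disj t u => sz t + sz u + 1
  | .par _ t u => sz t + sz u + 1

lemma sz_pos (t : Tm Act) : 1 ≤ sz t := by
  cases t <;> simp [sz]

/-- Every transition strictly decreases size. -/
lemma size_decr {t : Tm Act} {α : Option Act} {t' : Tm Act}
    (h : STr M t α t') : sz t' < sz t := by
  induction h <;> simp [sz] at * <;> omega

/-- No term has both a visible and a τ-transition. -/
lemma no_mix' (hM : IsStable M) {t y z : Tm Act} {α : Option Act}
    (h1 : STr M t α y) (hα : α ≠ none) (h2 : STr M t none z) : False := by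
  induction h1 generalizing z with
  | pre => cases h2; exact hα rfl
  | ecTauL => exact hα rfl
  | ecTauR => exact hα rfl
  | conjTauL => exact hα rfl
  | conjTauR => exact hα rfl
  | disjL => exact hα rfl
  | disjR => exact hα rfl
  | parTauL => exact hα rfl
  | parTauR => exact hα rfl
  | ecL ht hst ih =>
      cases h2 with
      | ecTauL h => exact ih (by simp) h
      | ecTauR h => exact hst _ ((hM.1 _ _ _).mpr h)
  | ecR hst ht ih =>
      cases h2 with
      | ecTauL h => exact hst _ ((hM.1 _ _ _).mpr h)
      | ecTauR h => exact ih (by simp) h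
  | conjAct h1 h2' ih1 ih2 =>
      cases h2 with
      | conjTauL h => exact ih1 (by simp) h
      | conjTauR h => exact ih2 (by simp) h
  | parL ht hst hA ih =>
      cases h2 with
      | parTauL h => exact ih (by simp) h
      | parTauR h => exact hst _ ((hM.1 _ _ _).mpr h)
  | parR hst ht hA ih =>
      cases h2 with
      | parTauL h => exact hst _ ((hM.1 _ _ _).mpr h)
      | parTauR h => exact ih (by simp) h
  | parSync h1 h2' hA ih1 ih2 =>
      cases h2 with
      | parTauL h => exact ih1 (by simp) h
      | parTauR h => exact ih2 (by simp) h

lemma no_mix (hM : IsStable M) {t y z : Tm Act} {a : Act}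
    (h1 : STr M t (some a) y) (h2 : STr M t none z) : False :=
  no_mix' hM h1 (by simp) h2

/-- A consistent term with a visible transition has a consistent successor. -/
lemma cons_succ' (hM : IsStable M) {t u : Tm Act} {α : Option Act}
    (h : STr M t α u) (hF : ¬ M.F t) :
    ∃ u', STr M t α u' ∧ ¬ M.F u' := by
  induction h with
  | pre α t =>
      refine ⟨t, STr.pre _ _, fun hft => hF ?_⟩
      exact (hM.2.1 _).mpr (SF.pre _ ((hM.2.1 _).mp hft))
  | ecL ht hst ih =>
      have hF1 : ¬ M.F _ := fun h1 => hF ((hM.2.1 _).mpr (SF.ecL ((hM.2.1 _).mp h1)))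
      obtain ⟨y', hy', hFy'⟩ := ih hF1
      exact ⟨y', STr.ecL hy' hst, hFy'⟩
  | ecR hst ht ih =>
      have hF2 : ¬ M.F _ := fun h1 => hF ((hM.2.1 _).mpr (SF.ecR ((hM.2.1 _).mp h1)))
      obtain ⟨y', hy', hFy'⟩ := ih hF2
      exact ⟨y', STr.ecR hst hy', hFy'⟩
  | @conjAct t1 t2 y1 y2 a h1 h2 ih1 ih2 =>
      by_contra hC
      push_neg at hC
      have hnofbar : ¬ M.Fbar (Tm.conj t1 t2) (some a) := by
        intro hfb
        rcases (hM.2.2 _ _).mp hfb with ⟨hstr, hnf⟩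
        exact hnf (hC _ hstr)
      exact hF ((hM.2.1 _).mpr (SF.conjDead (STr.conjAct h1 h2) hnofbar))
  | parL ht hst hA ih =>
      have hF1 : ¬ M.F _ := fun h1 => hF ((hM.2.1 _).mpr (SF.parL ((hM.2.1 _).mp h1)))
      have hF2 : ¬ M.F _ := fun h1 => hF ((hM.2.1 _).mpr (SF.parR ((hM.2.1 _).mp h1)))
      obtain ⟨y', hy', hFy'⟩ := ih hF1
      refine ⟨_, STr.parL hy' hst hA, fun h1 => ?_⟩
      cases (hM.2.1 _).mp h1 with
      | parL h => exact hFy' ((hM.2.1 _).mpr h)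
      | parR h => exact hF2 ((hM.2.1 _).mpr h)
  | parR hst ht hA ih =>
      have hF1 : ¬ M.F _ := fun h1 => hF ((hM.2.1 _).mpr (SF.parL ((hM.2.1 _).mp h1)))
      have hF2 : ¬ M.F _ := fun h1 => hF ((hM.2.1 _).mpr (SF.parR ((hM.2.1 _).mp h1)))
      obtain ⟨y', hy', hFy'⟩ := ih hF2
      refine ⟨_, STr.parR hst hy' hA, fun h1 => ?_⟩
      cases (hM.2.1 _).mp h1 with
      | parL h => exact hF1 ((hM.2.1 _).mpr h)
      | parR h => exact hFy' ((hM.2.1 _).mpr h)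
  | parSync h1 h2 hA ih1 ih2 =>
      have hF1 : ¬ M.F _ := fun h => hF ((hM.2.1 _).mpr (SF.parL ((hM.2.1 _).mp h)))
      have hF2 : ¬ M.F _ := fun h => hF ((hM.2.1 _).mpr (SF.parR ((hM.2.1 _).mp h)))
      obtain ⟨y1', hy1', hFy1'⟩ := ih1 hF1
      obtain ⟨y2', hy2', hFy2'⟩ := ih2 hF2
      refine ⟨_, STr.parSync hy1' hy2' hA, fun h => ?_⟩
      cases (hM.2.1 _).mp h with
      | parL h => exact hFy1' ((hM.2.1 _).mpr h)
      | parR h => exact hFy2' ((hM.2.1 _).mpr h)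
  | ecTauL ht ih =>
      have hF1 : ¬ M.F _ := fun h1 => hF ((hM.2.1 _).mpr (SF.ecL ((hM.2.1 _).mp h1)))
      have hF2 : ¬ M.F _ := fun h1 => hF ((hM.2.1 _).mpr (SF.ecR ((hM.2.1 _).mp h1)))
      obtain ⟨y', hy', hFy'⟩ := ih hF1
      refine ⟨_, STr.ecTauL hy', fun h1 => ?_⟩
      cases (hM.2.1 _).mp h1 with
      | ecL h => exact hFy' ((hM.2.1 _).mpr h)
      | ecR h => exact hF2 ((hM.2.1 _).mpr h)
  | ecTauR ht ih =>
      have hF1 : ¬ M.F _ := fun h1 => hF ((hM.2.1 _).mpr (SF.ecL ((hM.2.1 _).mp h1)))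
      have hF2 : ¬ M.F _ := fun h1 => hF ((hM.2.1 _).mpr (SF.ecR ((hM.2.1 _).mp h1)))
      obtain ⟨y', hy', hFy'⟩ := ih hF2
      refine ⟨_, STr.ecTauR hy', fun h1 => ?_⟩
      cases (hM.2.1 _).mp h1 with
      | ecL h => exact hF1 ((hM.2.1 _).mpr h)
      | ecR h => exact hFy' ((hM.2.1 _).mpr h)
  | @conjTauL t1 t2 y1 ht ih =>
      by_contra hC
      push_neg at hC
      have hnofbar : ¬ M.Fbar (Tm.conj t1 t2) none := by
        intro hfb
        rcases (hM.2.2 _ _).mp hfb with ⟨hstr, hnf⟩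
        exact hnf (hC _ hstr)
      exact hF ((hM.2.1 _).mpr (SF.conjDead (STr.conjTauL ht) hnofbar))
  | @conjTauR t1 t2 y2 ht ih =>
      by_contra hC
      push_neg at hC
      have hnofbar : ¬ M.Fbar (Tm.conj t1 t2) none := by
        intro hfb
        rcases (hM.2.2 _ _).mp hfb with ⟨hstr, hnf⟩
        exact hnf (hC _ hstr)
      exact hF ((hM.2.1 _).mpr (SF.conjDead (STr.conjTauR ht) hnofbar))
  | disjL t1 t2 =>
      by_cases h1 : M.F t1
      · refine ⟨t2, STr.disjR _ _, fun h2 => ?_⟩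
        exact hF ((hM.2.1 _).mpr (SF.disj ((hM.2.1 _).mp h1) ((hM.2.1 _).mp h2)))
      · exact ⟨t1, STr.disjL _ _, h1⟩
  | disjR t1 t2 =>
      by_cases h1 : M.F t1
      · refine ⟨t2, STr.disjR _ _, fun h2 => ?_⟩
        exact hF ((hM.2.1 _).mpr (SF.disj ((hM.2.1 _).mp h1) ((hM.2.1 _).mp h2)))
      · exact ⟨t1, STr.disjL _ _, h1⟩
  | parTauL ht ih =>
      have hF1 : ¬ M.F _ := fun h1 => hF ((hM.2.1 _).mpr (SF.parL ((hM.2.1 _).mp h1)))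
      have hF2 : ¬ M.F _ := fun h1 => hF ((hM.2.1 _).mpr (SF.parR ((hM.2.1 _).mp h1)))
      obtain ⟨y', hy', hFy'⟩ := ih hF1
      refine ⟨_, STr.parTauL hy', fun h1 => ?_⟩
      cases (hM.2.1 _).mp h1 with
      | parL h => exact hFy' ((hM.2.1 _).mpr h)
      | parR h => exact hF2 ((hM.2.1 _).mpr h)
  | parTauR ht ih =>
      have hF1 : ¬ M.F _ := fun h1 => hF ((hM.2.1 _).mpr (SF.parL ((hM.2.1 _).mp h1)))
      have hF2 : ¬ M.F _ := fun h1 => hF ((hM.2.1 _).mpr (SF.parR ((hM.2.1 _).mp h1)))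
      obtain ⟨y', hy', hFy'⟩ := ih hF2
      refine ⟨_, STr.parTauR hy', fun h1 => ?_⟩
      cases (hM.2.1 _).mp h1 with
      | parL h => exact hF1 ((hM.2.1 _).mpr h)
      | parR h => exact hFy' ((hM.2.1 _).mpr h)

/-- Every consistent term can reach a consistent stable term via `⇒ε_F`. -/
lemma reach_stable (hM : IsStable M) :
    ∀ n (t : Tm Act), sz t ≤ n → ¬ M.F t → ∃ s, EpsF M t s ∧ Stable M s := by
  intro n
  induction n with
  | zero => intro t h; have := sz_pos t; omega
  | succ n ih =>
      intro t hsz hF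
      by_cases hst : Stable M t
      · exact ⟨t, ⟨hF, Relation.ReflTransGen.refl⟩, hst⟩
      · simp only [Stable, not_forall, not_not] at hst
        obtain ⟨u, hu⟩ := hst
        obtain ⟨u', hu', hFu'⟩ := cons_succ' hM ((hM.1 _ _ _).mp hu) hF
        have hlt : sz u' ≤ n := by have := size_decr hu'; omega
        obtain ⟨s, ⟨hFs, hchain⟩, hstb⟩ := ih u' hlt hFu'
        exact ⟨s, ⟨hF, Relation.ReflTransGen.head ⟨(hM.1 _ _ _).mpr hu', hF, hFu'⟩ hchain⟩, hstb⟩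

lemma epsF_last {t s : Tm Act} (h : EpsF M t s) : ¬ M.F s := by
  obtain ⟨h0, hr⟩ := h
  induction hr with
  | refl => exact h0
  | tail _ hst _ => exact hst.2.2

lemma epsF_stable_eq {t s : Tm Act} (hst : Stable M t) (h : EpsF M t s) : t = s := by
  rcases h.2.cases_head with rfl | ⟨c, hc, _⟩
  · rfl
  · exact absurd hc.1 (hst c)

/-- Main lemma, by strong induction on sizes. -/
lemma main_conj (hM : IsStable M) :
    ∀ n (p2 p3 s2 s3 u : Tm Act), sz p2 + sz p3 ≤ n → ¬ M.F u →
    RSs M u s2 → RSs M u s3 → EpsF M p2 s2 → Stable M s2 →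
    EpsF M p3 s3 → Stable M s3 → ¬ M.F (Tm.conj p2 p3) := by
  intro n
  induction n using Nat.strong_induction_on with
  | _ n ih =>
  intro p2 p3 s2 s3 u hsz hFu h2 h3 he2 hst2 he3 hst3 hF
  obtain ⟨R2, hR2, hr2⟩ := h2
  obtain ⟨R3, hR3, hr3⟩ := h3
  cases (hM.2.1 _).mp hF with
  | conjL h => exact he2.1 ((hM.2.1 _).mpr h)
  | conjR h => exact he3.1 ((hM.2.1 _).mpr h)
  | @conjMisL _ _ y1 a ht hno hnotau =>
      have hp2st : Stable M p2 := fun y hy =>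
        hnotau _ ((hM.1 _ _ _).mpr (STr.conjTauL ((hM.1 _ _ _).mp hy)))
      have hp3st : Stable M p3 := fun y hy =>
        hnotau _ ((hM.1 _ _ _).mpr (STr.conjTauR ((hM.1 _ _ _).mp hy)))
      obtain rfl := epsF_stable_eq hp2st he2
      obtain rfl := epsF_stable_eq hp3st he3
      have hru2 := (hR2 u p2 hr2).2.2.2 hFu
      have hru3 := (hR3 u p3 hr3).2.2.2 hFu
      have : (some a) ∈ Ready M p3 := by
        rw [← hru3, hru2]; exact ⟨y1, (hM.1 _ _ _).mpr ht⟩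
      obtain ⟨y, hy⟩ := this
      exact hno y hy
  | @conjMisR _ _ y2 a hno ht hnotau =>
      have hp2st : Stable M p2 := fun y hy =>
        hnotau _ ((hM.1 _ _ _).mpr (STr.conjTauL ((hM.1 _ _ _).mp hy)))
      have hp3st : Stable M p3 := fun y hy =>
        hnotau _ ((hM.1 _ _ _).mpr (STr.conjTauR ((hM.1 _ _ _).mp hy)))
      obtain rfl := epsF_stable_eq hp2st he2
      obtain rfl := epsF_stable_eq hp3st he3
      have hru2 := (hR2 u p2 hr2).2.2.2 hFu
      have hru3 := (hR3 u p3 hr3).2.2.2 hFu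
      have : (some a) ∈ Ready M p2 := by
        rw [← hru2, hru3]; exact ⟨y2, (hM.1 _ _ _).mpr ht⟩
      obtain ⟨y, hy⟩ := this
      exact hno y hy
  | @conjDead _ _ z α hstr hnofbar =>
      cases hstr with
      | @conjTauL _ _ y1 ht =>
          rcases he2.2.cases_head with heq | ⟨c, hc, hchain⟩
          · exact hst2 y1 (heq ▸ (hM.1 _ _ _).mpr ht)
          · have hFc : ¬ M.F c := hc.2.2
            have hlt : sz c + sz p3 < n := by
              have := size_decr ((hM.1 _ _ _).mp hc.1)
              have := sz_pos p3
              omega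
            have hncF : ¬ M.F (Tm.conj c p3) :=
              ih _ hlt c p3 s2 s3 u le_rfl hFu ⟨R2, hR2, hr2⟩ ⟨R3, hR3, hr3⟩
                ⟨hFc, hchain⟩ hst2 he3 hst3
            exact hnofbar ((hM.2.2 _ _).mpr
              (SFbar.intro (STr.conjTauL ((hM.1 _ _ _).mp hc.1)) hncF))
      | @conjTauR _ _ y2 ht =>
          rcases he3.2.cases_head with heq | ⟨c, hc, hchain⟩
          · exact hst3 y2 (heq ▸ (hM.1 _ _ _).mpr ht)
          · have hFc : ¬ M.F c := hc.2.2
            have hlt : sz p2 + sz c < n := by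
              have := size_decr ((hM.1 _ _ _).mp hc.1)
              have := sz_pos p2
              omega
            have hncF : ¬ M.F (Tm.conj p2 c) :=
              ih _ hlt p2 c s2 s3 u le_rfl hFu ⟨R2, hR2, hr2⟩ ⟨R3, hR3, hr3⟩
                he2 hst2 ⟨hFc, hchain⟩ hst3
            exact hnofbar ((hM.2.2 _ _).mpr
              (SFbar.intro (STr.conjTauR ((hM.1 _ _ _).mp hc.1)) hncF))
      | @conjAct _ _ y1 y2 a ht2 ht3 =>
          have hp2st : Stable M p2 := fun y hy =>
            no_mix hM ht2 ((hM.1 _ _ _).mp hy)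
          have hp3st : Stable M p3 := fun y hy =>
            no_mix hM ht3 ((hM.1 _ _ _).mp hy)
          obtain rfl := epsF_stable_eq hp2st he2
          obtain rfl := epsF_stable_eq hp3st he3
          have hru2 := (hR2 u p2 hr2).2.2.2 hFu
          have hru3 := (hR3 u p3 hr3).2.2.2 hFu
          have : (some a) ∈ Ready M u := by
            rw [hru2]; exact ⟨y1, (hM.1 _ _ _).mpr ht2⟩
          obtain ⟨w, hw⟩ := this
          obtain ⟨w', hw', hFw'⟩ := cons_succ' hM ((hM.1 _ _ _).mp hw) hFu
          obtain ⟨w'', hEps, hstw''⟩ := reach_stable hM (sz w') w' le_rfl hFw'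
          have hweak : WeakFS M (some a) u w'' :=
            ⟨⟨u, w', ⟨hFu, Relation.ReflTransGen.refl⟩, (hM.1 _ _ _).mpr hw', hEps⟩, hstw''⟩
          obtain ⟨s2', hwfs2, hrel2⟩ := (hR2 u p2 hr2).2.2.1 a w'' hweak
          obtain ⟨s3', hwfs3, hrel3⟩ := (hR3 u p3 hr3).2.2.1 a w'' hweak
          obtain ⟨⟨r2, q2, her2, hrq2, heq2⟩, hsts2'⟩ := hwfs2
          obtain ⟨⟨r3, q3, her3, hrq3, heq3⟩, hsts3'⟩ := hwfs3
          obtain rfl := epsF_stable_eq hp2st her2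
          obtain rfl := epsF_stable_eq hp3st her3
          have hFw'' : ¬ M.F w'' := epsF_last hEps
          have hlt : sz q2 + sz q3 < n := by
            have := size_decr ((hM.1 _ _ _).mp hrq2)
            have := size_decr ((hM.1 _ _ _).mp hrq3)
            omega
          have hncF : ¬ M.F (Tm.conj q2 q3) :=
            ih _ hlt q2 q3 s2' s3' w'' le_rfl hFw'' ⟨R2, hR2, hrel2⟩ ⟨R3, hR3, hrel3⟩
              heq2 hsts2' heq3 hsts3'
          exact hnofbar ((hM.2.2 _ _).mpr
            (SFbar.intro (STr.conjAct ((hM.1 _ _ _).mp hrq2) ((hM.1 _ _ _).mp hrq3)) hncF))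

end Aux

end CLL

/-- if `t1 ⊏̃_RS t2`, `t1 ⊏̃_RS t3` and `t1 ∉ F_CLL`, then
`t2∧t3 ∉ F_CLL`. -/
theorem stmt9 (Act : Type) (M : CLL.Model Act) (hM : CLL.IsStable M)
    (t1 t2 t3 : CLL.Tm Act) (h2 : CLL.RSs M t1 t2) (h3 : CLL.RSs M t1 t3)
    (h1 : ¬ M.F t1) : ¬ M.F (CLL.Tm.conj t2 t3) := by
  obtain ⟨R2, hR2, hr2⟩ := h2
  obtain ⟨R3, hR3, hr3⟩ := h3
  have hst2 : CLL.Stable M t2 := (hR2 _ _ hr2).1.2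
  have hst3 : CLL.Stable M t3 := (hR3 _ _ hr3).1.2
  have hF2 : ¬ M.F t2 := (hR2 _ _ hr2).2.1 h1
  have hF3 : ¬ M.F t3 := (hR3 _ _ hr3).2.1 h1
  exact CLL.main_conj hM (CLL.sz t2 + CLL.sz t3) t2 t3 t2 t3 t1 le_rfl h1
    ⟨R2, hR2, hr2⟩ ⟨R3, hR3, hr3⟩ ⟨hF2, Relation.ReflTransGen.refl⟩ hst2
    ⟨hF3, Relation.ReflTransGen.refl⟩ hst3
end

section
/- Let a_i, b_j ∈ Act for i < n, j < m, and let all t_i, s_j be CLL process terms. (1) If {a_i : i < n} ≠ {b_j : j < m} then □_{i<n}a_i.t_i ∧ □_{j<m}b_j.s_j =_RS ⊥. (2) If {a_i : i < n} = {b_j : j < m} then □_{a_i=b_j, i<n, j<m} a_i.(t_i∧s_j) ⊑_RS □_{i<n}a_i.t_i ∧ □_{j<m}b_j.s_j. (3) □_{i<n}a_i.(t_i∧s_i) ⊑_RS □_{i<n}a_i.t_i ∧ □_{i<n}a_i.s_i. -/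
namespace CLL

attribute [local instance] Classical.propDecidable

variable {Act : Type}

end CLL

/-!
A term `□_{i<n} a_i.t_i` is stable, its moves are exactly its prefixes, and it is inconsistent
iff one of the `t_i` is. Two stable terms with different ready sets have an inconsistent
conjunction by the mismatch rule for `∧`, so in (1) both sides are inconsistent and `⊑_RS` holds
vacuously in both directions. In (2) and (3) the left-hand side is stable with the same ready set
as the conjunction, and each of its moves is a move of the conjunction to the same term; hence the
identity on stable terms together with this pair is a stable ready simulation. What remains is
consistency of the conjunction when the left-hand side is consistent: for each action the
conjunction has a consistent derivative, namely the matched conjunct, so the `F̄_α` rule cannot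
make it inconsistent.
-/

namespace CLL

variable {Act : Type} {M : Model Act}

section BigEC

variable {S P : Tm Act → Prop} (hS : ∀ x y, S x → S y → S (Tm.ec x y))
  (hP : ∀ x y, S x → S y → (P (Tm.ec x y) ↔ P x ∨ P y))
include hS hP

lemma foldl_ec_iff : ∀ {ts : List (Tm Act)} {acc : Tm Act}, S acc → (∀ t ∈ ts, S t) →
    (P (ts.foldl Tm.ec acc) ↔ P acc ∨ ∃ t ∈ ts, P t)
  | [], _, _, _ => by simp
  | t :: ts, acc, hacc, hts => by
    have ht := hts t List.mem_cons_self
    rw [List.foldl_cons, foldl_ec_iff (hS _ _ hacc ht)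
      (fun s hs => hts s (List.mem_cons_of_mem _ hs)), hP _ _ hacc ht]
    simp [or_assoc]

lemma bigEC_iff (hnil : ¬ P Tm.nil) {L : List (Tm Act)} (hL : ∀ t ∈ L, S t) :
    P (bigEC L) ↔ ∃ t ∈ L, P t := by
  cases L with
  | nil => simp [bigEC, hnil]
  | cons t ts =>
    rw [bigEC, foldl_ec_iff hS hP (hL t List.mem_cons_self)
      (fun s hs => hL s (List.mem_cons_of_mem _ hs))]
    simp

end BigEC

section StableModel

variable (hM : IsStable M)
include hM

lemma tr_pre {α β : Option Act} {t u : Tm Act} :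
    M.Tr (Tm.pre α t) β u ↔ β = α ∧ u = t := by
  rw [hM.1]
  constructor
  · rintro ⟨⟩; exact ⟨rfl, rfl⟩
  · rintro ⟨rfl, rfl⟩; exact STr.pre _ _

lemma not_tr_nil {α : Option Act} {u : Tm Act} : ¬ M.Tr Tm.nil α u := by
  rw [hM.1]; rintro ⟨⟩

lemma stable_pre_some (a : Act) (t : Tm Act) : Stable M (Tm.pre (some a) t) := fun _ h =>
  nomatch ((tr_pre hM).mp h).1

lemma tr_ec_of_stable {t1 t2 : Tm Act} (h1 : Stable M t1) (h2 : Stable M t2)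
    {α : Option Act} {u : Tm Act} :
    M.Tr (Tm.ec t1 t2) α u ↔ M.Tr t1 α u ∨ M.Tr t2 α u := by
  simp only [hM.1]
  constructor
  · intro h
    cases h with
    | ecL h _ => exact .inl h
    | ecR _ h => exact .inr h
    | ecTauL h => exact absurd ((hM.1 _ _ _).mpr h) (h1 _)
    | ecTauR h => exact absurd ((hM.1 _ _ _).mpr h) (h2 _)
  · rintro (h | h) <;> cases α
    · exact absurd ((hM.1 _ _ _).mpr h) (h1 _)
    · exact STr.ecL h h2
    · exact absurd ((hM.1 _ _ _).mpr h) (h2 _)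
    · exact STr.ecR h1 h

lemma stable_ec {t1 t2 : Tm Act} (h1 : Stable M t1) (h2 : Stable M t2) :
    Stable M (Tm.ec t1 t2) := fun u h =>
  ((tr_ec_of_stable hM h1 h2).mp h).elim (h1 u) (h2 u)

lemma tr_conj_some {t1 t2 u : Tm Act} {a : Act} :
    M.Tr (Tm.conj t1 t2) (some a) u ↔
      ∃ y1 y2, u = Tm.conj y1 y2 ∧ M.Tr t1 (some a) y1 ∧ M.Tr t2 (some a) y2 := by
  simp only [hM.1]
  constructor
  · intro h
    cases h with
    | conjAct h1 h2 => exact ⟨_, _, rfl, h1, h2⟩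
  · rintro ⟨y1, y2, rfl, h1, h2⟩; exact STr.conjAct h1 h2

lemma stable_conj {t1 t2 : Tm Act} (h1 : Stable M t1) (h2 : Stable M t2) :
    Stable M (Tm.conj t1 t2) := by
  intro u h
  rw [hM.1] at h
  cases h with
  | conjTauL h => exact h1 _ ((hM.1 _ _ _).mpr h)
  | conjTauR h => exact h2 _ ((hM.1 _ _ _).mpr h)

lemma F_bot : M.F (Tm.bot : Tm Act) := (hM.2.1 _).mpr SF.bot

lemma not_F_nil : ¬ M.F (Tm.nil : Tm Act) := by
  rw [hM.2.1]; rintro ⟨⟩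

lemma F_pre {α : Option Act} {t : Tm Act} : M.F (Tm.pre α t) ↔ M.F t := by
  simp only [hM.2.1]
  constructor
  · intro h
    cases h with
    | pre _ h => exact h
  · exact SF.pre α

lemma F_ec {t1 t2 : Tm Act} : M.F (Tm.ec t1 t2) ↔ M.F t1 ∨ M.F t2 := by
  simp only [hM.2.1]
  constructor
  · intro h
    cases h with
    | ecL h => exact .inl h
    | ecR h => exact .inr h
  · rintro (h | h)
    · exact SF.ecL h
    · exact SF.ecR h

lemma F_conj_of_ready_ne {t1 t2 : Tm Act} (h1 : Stable M t1) (h2 : Stable M t2)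
    (hne : Ready M t1 ≠ Ready M t2) : M.F (Tm.conj t1 t2) := by
  have hτ : ∀ y, ¬ M.Tr (Tm.conj t1 t2) none y := stable_conj hM h1 h2
  obtain ⟨α, hα⟩ : ∃ α, ¬ (α ∈ Ready M t1 ↔ α ∈ Ready M t2) := by
    by_contra! h
    exact hne (Set.ext h)
  rcases α with _ | a
  · exact absurd hα (by simp [Ready, h1 _, h2 _])
  rw [hM.2.1]
  by_cases ha : some a ∈ Ready M t1
  · obtain ⟨y1, hy1⟩ := ha
    exact SF.conjMisL ((hM.1 _ _ _).mp hy1)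
      (fun y hy => hα ⟨fun _ => ⟨y, hy⟩, fun _ => ⟨y1, hy1⟩⟩) hτ
  · obtain ⟨y2, hy2⟩ : some a ∈ Ready M t2 := by tauto
    exact SF.conjMisR (fun y hy => ha ⟨y, hy⟩) ((hM.1 _ _ _).mp hy2) hτ

lemma not_F_conj {t1 t2 : Tm Act} (h1 : ¬ M.F t1) (h2 : ¬ M.F t2)
    (hI : Ready M t1 = Ready M t2)
    (hd : ∀ α z, M.Tr (Tm.conj t1 t2) α z → ∃ z', M.Tr (Tm.conj t1 t2) α z' ∧ ¬ M.F z') :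
    ¬ M.F (Tm.conj t1 t2) := by
  rw [hM.2.1]
  intro h
  cases h with
  | conjL h => exact h1 ((hM.2.1 _).mpr h)
  | conjR h => exact h2 ((hM.2.1 _).mpr h)
  | @conjMisL _ _ _ a hy1 hno _ =>
    obtain ⟨y2, hy2⟩ : some a ∈ Ready M t2 := hI ▸ ⟨_, (hM.1 _ _ _).mpr hy1⟩
    exact hno y2 hy2
  | @conjMisR _ _ _ a hno hy2 _ =>
    obtain ⟨y1, hy1⟩ : some a ∈ Ready M t1 := hI ▸ ⟨_, (hM.1 _ _ _).mpr hy2⟩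
    exact hno y1 hy1
  | conjDead hz hnb =>
    obtain ⟨z', hz', hFz'⟩ := hd _ _ ((hM.1 _ _ _).mpr hz)
    exact hnb ((hM.2.2 _ _).mpr (SFbar.intro ((hM.1 _ _ _).mp hz') hFz'))

lemma F_conj_left {t1 t2 : Tm Act} (h : M.F t1) : M.F (Tm.conj t1 t2) :=
  (hM.2.1 _).mpr (SF.conjL ((hM.2.1 _).mp h))

lemma F_conj_right {t1 t2 : Tm Act} (h : M.F t2) : M.F (Tm.conj t1 t2) :=
  (hM.2.1 _).mpr (SF.conjR ((hM.2.1 _).mp h))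

lemma tr_ecPre (l : List (Act × Tm Act)) {α : Option Act} {u : Tm Act} :
    M.Tr (ecPre l) α u ↔ ∃ p ∈ l, α = some p.1 ∧ u = p.2 := by
  rw [ecPre, bigEC_iff (P := fun x => M.Tr x α u) (fun _ _ => stable_ec hM)
    (fun _ _ h1 h2 => tr_ec_of_stable hM h1 h2) (not_tr_nil hM)]
  · simp [tr_pre hM]
  · simp only [List.mem_map]
    rintro _ ⟨p, -, rfl⟩
    exact stable_pre_some hM _ _

lemma stable_ecPre (l : List (Act × Tm Act)) : Stable M (ecPre l) := fun _ h =>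
  have ⟨_, _, h, _⟩ := (tr_ecPre hM l).mp h
  nomatch h

lemma ready_ecPre (l : List (Act × Tm Act)) :
    Ready M (ecPre l) = Option.some '' {a | a ∈ l.map Prod.fst} := by
  ext α
  simp only [Ready, tr_ecPre hM, Set.mem_ofPred_eq, Set.mem_image, List.mem_map]
  aesop

lemma F_ecPre (l : List (Act × Tm Act)) : M.F (ecPre l) ↔ ∃ p ∈ l, M.F p.2 := by
  rw [ecPre, bigEC_iff (S := fun _ => True) (P := M.F) (fun _ _ _ _ => trivial)
    (fun _ _ _ _ => F_ec hM) (not_F_nil hM) (fun _ _ => trivial)]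
  simp [F_pre hM]

lemma tr_conj_ecPre (l1 l2 : List (Act × Tm Act)) {α : Option Act} {z : Tm Act} :
    M.Tr (Tm.conj (ecPre l1) (ecPre l2)) α z ↔
      ∃ p ∈ l1, ∃ r ∈ l2, p.1 = r.1 ∧ α = some p.1 ∧ z = Tm.conj p.2 r.2 := by
  cases α with
  | none => simp [stable_conj hM (stable_ecPre hM l1) (stable_ecPre hM l2) z]
  | some a =>
    simp only [tr_conj_some hM, tr_ecPre hM, Option.some.injEq]
    constructor
    · rintro ⟨_, _, rfl, ⟨p, hp, rfl, rfl⟩, ⟨r, hr, hra, rfl⟩⟩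
      exact ⟨p, hp, r, hr, hra, rfl, rfl⟩
    · rintro ⟨p, hp, r, hr, hpr, rfl, rfl⟩
      exact ⟨_, _, rfl, ⟨p, hp, rfl, rfl⟩, ⟨r, hr, hpr, rfl⟩⟩

end StableModel

section ReadySimulation

lemma eq_of_reflTransGen_tauF {t r : Tm Act} (ht : Stable M t)
    (h : Relation.ReflTransGen (TauF M) t r) : r = t := by
  rcases h.cases_head with rfl | ⟨c, hc, -⟩
  · rfl
  · exact absurd hc.1 (ht c)

lemma rsle_of_F {t s : Tm Act} (ht : M.F t) : RSle M t s := fun _ h => absurd ht h.1.1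

lemma rsle_of_stable {t s : Tm Act} (ht : Stable M t) (hs : Stable M s)
    (hF : ¬ M.F t → ¬ M.F s) (hI : Ready M t = Ready M s)
    (hmove : ∀ (a : Act) p, M.Tr t (some a) p → M.Tr s (some a) p) : RSle M t s := by
  rintro t' ⟨⟨hFt, hsteps⟩, -⟩
  obtain rfl := eq_of_reflTransGen_tauF ht hsteps
  have hFs := hF hFt
  refine ⟨s, ⟨⟨hFs, .refl⟩, hs⟩, fun x y => (x = y ∧ Stable M x) ∨ (x = t' ∧ y = s), ?_,
    .inr ⟨rfl, rfl⟩⟩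
  rintro x y (⟨rfl, hx⟩ | ⟨rfl, rfl⟩)
  · exact ⟨⟨hx, hx⟩, id, fun a x' hx' => ⟨x', hx', .inl ⟨rfl, hx'.2⟩⟩, fun _ => rfl⟩
  · refine ⟨⟨ht, hs⟩, fun _ => hFs, ?_, fun _ => hI⟩
    rintro a u ⟨⟨r, p, ⟨-, hr⟩, hrp, hp⟩, hu⟩
    obtain rfl := eq_of_reflTransGen_tauF ht hr
    exact ⟨u, ⟨⟨y, p, ⟨hFs, .refl⟩, hmove a p hrp, hp⟩, hu⟩, .inl ⟨rfl, hu⟩⟩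

end ReadySimulation

lemma mem_matched {l1 l2 : List (Act × Tm Act)} {q : Act × Tm Act} :
    q ∈ matched l1 l2 ↔ ∃ p ∈ l1, ∃ r ∈ l2, p.1 = r.1 ∧ q = (p.1, Tm.conj p.2 r.2) := by
  simp only [matched, List.mem_map, List.mem_filter, decide_eq_true_iff]
  constructor
  · rintro ⟨⟨p, r⟩, ⟨hpr, h⟩, rfl⟩
    obtain ⟨hp, hr⟩ := List.pair_mem_product.mp hpr
    exact ⟨p, hp, r, hr, h, rfl⟩
  · rintro ⟨p, hp, r, hr, h, rfl⟩
    exact ⟨(p, r), ⟨List.pair_mem_product.mpr ⟨hp, hr⟩, h⟩, rfl⟩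

section Matching

variable (hM : IsStable M) {l1 l2 lm : List (Act × Tm Act)}
  (hl1 : ∀ p ∈ l1, ∃ r ∈ l2, p.1 = r.1 ∧ (p.1, Tm.conj p.2 r.2) ∈ lm)
  (hl2 : ∀ r ∈ l2, ∃ p ∈ l1, p.1 = r.1 ∧ (p.1, Tm.conj p.2 r.2) ∈ lm)
include hM hl1

lemma tr_conj_ecPre_of_cover {α : Option Act} {z : Tm Act}
    (h : M.Tr (Tm.conj (ecPre l1) (ecPre l2)) α z) :
    ∃ p ∈ l1, ∃ r ∈ l2, α = some p.1 ∧ p.1 = r.1 ∧ (p.1, Tm.conj p.2 r.2) ∈ lm := by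
  obtain ⟨p, hp, -, -, -, rfl, -⟩ := (tr_conj_ecPre hM l1 l2).mp h
  obtain ⟨r, hr, hpr, hmem⟩ := hl1 p hp
  exact ⟨p, hp, r, hr, rfl, hpr, hmem⟩

include hl2

lemma ready_ecPre_eq_of_cover : Ready M (ecPre l1) = Ready M (ecPre l2) := by
  rw [ready_ecPre hM, ready_ecPre hM]
  congr 1
  ext a
  simp only [Set.mem_ofPred_eq, List.mem_map]
  constructor
  · rintro ⟨p, hp, rfl⟩
    obtain ⟨r, hr, hpr, -⟩ := hl1 p hp
    exact ⟨r, hr, hpr.symm⟩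
  · rintro ⟨r, hr, rfl⟩
    obtain ⟨p, hp, hpr, -⟩ := hl2 r hr
    exact ⟨p, hp, hpr⟩

lemma not_F_conj_ecPre_of_cover (hlm : ¬ M.F (ecPre lm)) :
    ¬ M.F (Tm.conj (ecPre l1) (ecPre l2)) := by
  have hq : ∀ q ∈ lm, ¬ M.F q.2 := fun q hq h => hlm ((F_ecPre hM lm).mpr ⟨q, hq, h⟩)
  refine not_F_conj hM ?_ ?_ (ready_ecPre_eq_of_cover hM hl1 hl2) ?_
  · rw [F_ecPre hM]
    rintro ⟨p, hp, h⟩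
    obtain ⟨r, -, -, hmem⟩ := hl1 p hp
    exact hq _ hmem (F_conj_left hM h)
  · rw [F_ecPre hM]
    rintro ⟨r, hr, h⟩
    obtain ⟨p, -, -, hmem⟩ := hl2 r hr
    exact hq _ hmem (F_conj_right hM h)
  · intro α z h
    obtain ⟨p, hp, r, hr, rfl, hpr, hmem⟩ := tr_conj_ecPre_of_cover hM hl1 h
    exact ⟨_, (tr_conj_ecPre hM l1 l2).mpr ⟨p, hp, r, hr, hpr, rfl, rfl⟩, hq _ hmem⟩

lemma ecPre_rsle_conj
    (hlm : ∀ q ∈ lm, ∃ p ∈ l1, ∃ r ∈ l2, p.1 = r.1 ∧ q = (p.1, Tm.conj p.2 r.2)) :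
    RSle M (ecPre lm) (Tm.conj (ecPre l1) (ecPre l2)) := by
  have hc : Stable M (Tm.conj (ecPre l1) (ecPre l2)) :=
    stable_conj hM (stable_ecPre hM l1) (stable_ecPre hM l2)
  have hmove : ∀ (a : Act) u, M.Tr (ecPre lm) (some a) u →
      M.Tr (Tm.conj (ecPre l1) (ecPre l2)) (some a) u := by
    intro a u h
    obtain ⟨q, hq, ha, rfl⟩ := (tr_ecPre hM lm).mp h
    obtain ⟨p, hp, r, hr, hpr, rfl⟩ := hlm q hq
    exact (tr_conj_ecPre hM l1 l2).mpr ⟨p, hp, r, hr, hpr, ha, rfl⟩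
  refine rsle_of_stable (stable_ecPre hM lm) hc (not_F_conj_ecPre_of_cover hM hl1 hl2) ?_ hmove
  ext α
  constructor
  · rintro ⟨u, hu⟩
    cases α with
    | none => exact absurd hu (stable_ecPre hM lm u)
    | some a => exact ⟨u, hmove a u hu⟩
  · rintro ⟨z, h⟩
    obtain ⟨p, -, r, -, rfl, -, hmem⟩ := tr_conj_ecPre_of_cover hM hl1 h
    exact ⟨_, (tr_ecPre hM lm).mpr ⟨_, hmem, rfl, rfl⟩⟩

end Matching

end CLL

/-- conjunctions of general external choices of prefixed terms. -/
theorem stmt11 (Act : Type) (M : CLL.Model Act) (hM : CLL.IsStable M) :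
    (∀ l1 l2 : List (Act × CLL.Tm Act),
      ({a | a ∈ l1.map Prod.fst} : Set Act) ≠ {a | a ∈ l2.map Prod.fst} →
      CLL.RSeq M (CLL.Tm.conj (CLL.ecPre l1) (CLL.ecPre l2)) CLL.Tm.bot) ∧
    (∀ l1 l2 : List (Act × CLL.Tm Act),
      ({a | a ∈ l1.map Prod.fst} : Set Act) = {a | a ∈ l2.map Prod.fst} →
      CLL.RSle M (CLL.ecPre (CLL.matched l1 l2))
        (CLL.Tm.conj (CLL.ecPre l1) (CLL.ecPre l2))) ∧
    (∀ l : List (Act × CLL.Tm Act × CLL.Tm Act),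
      CLL.RSle M (CLL.ecPre (l.map fun p => (p.1, CLL.Tm.conj p.2.1 p.2.2)))
        (CLL.Tm.conj (CLL.ecPre (l.map fun p => (p.1, p.2.1)))
                     (CLL.ecPre (l.map fun p => (p.1, p.2.2))))) := by
  open CLL in
  refine ⟨fun l1 l2 hne => ?_, fun l1 l2 hacts => ?_, fun l => ?_⟩
  · have hready : Ready M (ecPre l1) ≠ Ready M (ecPre l2) := by
      rw [ready_ecPre hM, ready_ecPre hM]
      exact (Set.image_injective.mpr (Option.some_injective _)).ne hne
    exact ⟨rsle_of_F (F_conj_of_ready_ne hM (stable_ecPre hM l1) (stable_ecPre hM l2) hready),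
      rsle_of_F (F_bot hM)⟩
  · have partner : ∀ {l l' : List (Act × Tm Act)}, {a | a ∈ l.map Prod.fst} =
        {a | a ∈ l'.map Prod.fst} → ∀ p ∈ l, ∃ r ∈ l', r.1 = p.1 := fun h p hp =>
      List.mem_map.mp (Set.ext_iff.mp h p.1 |>.mp (List.mem_map_of_mem hp))
    refine ecPre_rsle_conj hM (fun p hp => ?_) (fun r hr => ?_) (fun q => mem_matched.mp)
    · obtain ⟨r, hr, hrp⟩ := partner hacts p hp
      exact ⟨r, hr, hrp.symm, mem_matched.mpr ⟨p, hp, r, hr, hrp.symm, rfl⟩⟩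
    · obtain ⟨p, hp, hpr⟩ := partner hacts.symm r hr
      exact ⟨p, hp, hpr, mem_matched.mpr ⟨p, hp, r, hr, hpr, rfl⟩⟩
  · refine ecPre_rsle_conj hM ?_ ?_ ?_ <;> simp only [List.mem_map] <;> rintro _ ⟨x, hx, rfl⟩
    · exact ⟨_, ⟨x, hx, rfl⟩, rfl, x, hx, rfl⟩
    · exact ⟨_, ⟨x, hx, rfl⟩, rfl, x, hx, rfl⟩
    · exact ⟨_, ⟨x, hx, rfl⟩, _, ⟨x, hx, rfl⟩, rfl, rfl⟩
end
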